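/- Adding one new sample (x, y) updates the accumulated quantities via A^(y) ← A^(y) + xᵀx, C^(y) ← C^(y) + xᵀ·onehot(y), N^(y) ← N^(y) + 1, and the resulting classifier (Σ_z (1/N^(z))A^(z) + γI)⁻¹(Σ_z (1/N^(z))C^(z)) equals the minimizer of the weighted loss over the augmented dataset; thus AIR admits an exact online (one-sample-at-a-time) update. -/

import Mathlib

open Matrix

/-- Squared Frobenius norm of a real matrix. -/
def frobSq {m n : ℕ} (M : Matrix (Fin m) (Fin n) ℝ) : ℝ :=
  ∑ i, ∑ j, (M i j) ^ 2

/-- Frobenius inner product of two real matrices. -/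
noncomputable def mdot {p q : ℕ} (M N : Matrix (Fin p) (Fin q) ℝ) : ℝ :=
  ∑ i, ∑ j, M i j * N i j

lemma mdot_comm {p q : ℕ} (M N : Matrix (Fin p) (Fin q) ℝ) : mdot M N = mdot N M := by
  simp [mdot, mul_comm]

lemma mdot_self {p q : ℕ} (M : Matrix (Fin p) (Fin q) ℝ) : mdot M M = frobSq M := by
  simp [mdot, frobSq, sq]

lemma mdot_self_nonneg {p q : ℕ} (M : Matrix (Fin p) (Fin q) ℝ) : 0 ≤ mdot M M := by
  apply Finset.sum_nonneg; intro i _; apply Finset.sum_nonneg; intro j _; exact mul_self_nonneg _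

lemma mdot_self_eq_zero {p q : ℕ} {M : Matrix (Fin p) (Fin q) ℝ} (h : mdot M M = 0) : M = 0 := by
  ext i j
  have h1 : ∀ i ∈ Finset.univ, (0:ℝ) ≤ ∑ j, M i j * M i j := fun i _ =>
    Finset.sum_nonneg fun j _ => mul_self_nonneg _
  have := (Finset.sum_eq_zero_iff_of_nonneg h1).mp h i (Finset.mem_univ i)
  have h2 : ∀ j ∈ Finset.univ, (0:ℝ) ≤ M i j * M i j := fun j _ => mul_self_nonneg _
  have := (Finset.sum_eq_zero_iff_of_nonneg h2).mp this j (Finset.mem_univ j)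
  simpa [mul_self_eq_zero] using this

lemma mdot_eq_trace {p q : ℕ} (M N : Matrix (Fin p) (Fin q) ℝ) :
    mdot M N = Matrix.trace (Mᵀ * N) := by
  simp only [mdot, Matrix.trace, Matrix.diag, Matrix.mul_apply, Matrix.transpose_apply]
  rw [Finset.sum_comm]

lemma mdot_mul_left {p q r : ℕ} (M : Matrix (Fin p) (Fin q) ℝ)
    (U : Matrix (Fin q) (Fin r) ℝ) (V : Matrix (Fin p) (Fin r) ℝ) :
    mdot (M * U) V = mdot U (Mᵀ * V) := by
  rw [mdot_eq_trace, mdot_eq_trace, Matrix.transpose_mul, Matrix.mul_assoc]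

lemma mdot_add_right {p q : ℕ} (M N P : Matrix (Fin p) (Fin q) ℝ) :
    mdot M (N + P) = mdot M N + mdot M P := by
  simp [mdot, Matrix.add_apply, mul_add, Finset.sum_add_distrib]

lemma mdot_sub_right {p q : ℕ} (M N P : Matrix (Fin p) (Fin q) ℝ) :
    mdot M (N - P) = mdot M N - mdot M P := by
  simp [mdot, Matrix.sub_apply, mul_sub, Finset.sum_sub_distrib]

lemma mdot_smul_right {p q : ℕ} (c : ℝ) (M N : Matrix (Fin p) (Fin q) ℝ) :
    mdot M (c • N) = c * mdot M N := by
  simp [mdot, Finset.mul_sum, mul_left_comm]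

lemma mdot_sum_right {p q : ℕ} {ι : Type*} (s : Finset ι) (M : Matrix (Fin p) (Fin q) ℝ)
    (F : ι → Matrix (Fin p) (Fin q) ℝ) :
    mdot M (∑ i ∈ s, F i) = ∑ i ∈ s, mdot M (F i) := by
  classical
  induction s using Finset.induction with
  | empty => simp [mdot]
  | insert _ _ h ih => rw [Finset.sum_insert h, Finset.sum_insert h, mdot_add_right, ih]

lemma mdot_sub_sub {p q : ℕ} (a b : Matrix (Fin p) (Fin q) ℝ) :
    mdot (a - b) (a - b) = mdot a a - 2 * mdot a b + mdot b b := by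
  rw [mdot_sub_right, mdot_comm (a - b) a, mdot_comm (a - b) b, mdot_sub_right,
    mdot_sub_right, mdot_comm b a]
  ring

/-- Expansion of one squared-residual term. -/
lemma frobSq_residual {f m : ℕ} (u : Matrix (Fin 1) (Fin f) ℝ)
    (v : Matrix (Fin 1) (Fin m) ℝ) (W : Matrix (Fin f) (Fin m) ℝ) :
    frobSq (u * W - v) =
      mdot W ((uᵀ * u) * W) - 2 * mdot W (uᵀ * v) + frobSq v := by
  rw [← mdot_self, ← mdot_self (M := v), mdot_sub_sub, mdot_mul_left u W (u * W),
    ← Matrix.mul_assoc, mdot_mul_left u W v]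

lemma psd_smul {n : ℕ} {M : Matrix (Fin n) (Fin n) ℝ} (hM : M.PosSemidef)
    {c : ℝ} (hc : 0 ≤ c) : (c • M).PosSemidef := by
  refine ⟨?_, fun v => ?_⟩
  · unfold Matrix.IsHermitian at *
    rw [Matrix.conjTranspose_smul, hM.1, star_trivial]
  · exact (hM.smul hc).2 v

lemma psd_tmul {p f : ℕ} (u : Matrix (Fin p) (Fin f) ℝ) : (uᵀ * u).PosSemidef := by
  have := Matrix.posSemidef_conjTranspose_mul_self u
  rwa [Matrix.conjTranspose_eq_transpose_of_trivial] at this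

/-- Adding one new sample `(x₀, y₀)` updates the accumulated quantities via
`A^(y₀) ← A^(y₀) + x₀ᵀx₀`, `C^(y₀) ← C^(y₀) + x₀ᵀ·onehot(y₀)`, `N^(y₀) ← N^(y₀) + 1`, and
the resulting classifier `(Σ_z (1/N^(z))A^(z) + γI)⁻¹(Σ_z (1/N^(z))C^(z))` equals the
minimizer of the weighted loss over the augmented dataset: AIR admits an exact online
(one-sample-at-a-time) update. -/
theorem AIR_online_update (m f : ℕ) (Nold : Fin m → ℕ)
    -- previously seen samples of each class, and the one-hot targets
    (x : (z : Fin m) → Fin (Nold z) → Matrix (Fin 1) (Fin f) ℝ)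
    (e : Fin m → Matrix (Fin 1) (Fin m) ℝ)
    (he : ∀ z j, e z 0 j = if j = z then 1 else 0)
    -- previously accumulated quantities
    (A : Fin m → Matrix (Fin f) (Fin f) ℝ)
    (Cm : Fin m → Matrix (Fin f) (Fin m) ℝ)
    (hA : ∀ z, A z = ∑ i, (x z i)ᵀ * x z i)
    (hC : ∀ z, Cm z = ∑ i, (x z i)ᵀ * e z)
    -- the new sample, of class y₀
    (y₀ : Fin m) (x₀ : Matrix (Fin 1) (Fin f) ℝ)
    -- updated quantities
    (A' : Fin m → Matrix (Fin f) (Fin f) ℝ)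
    (C' : Fin m → Matrix (Fin f) (Fin m) ℝ)
    (N' : Fin m → ℕ)
    (hA' : ∀ z, A' z = A z + if z = y₀ then x₀ᵀ * x₀ else 0)
    (hC' : ∀ z, C' z = Cm z + if z = y₀ then x₀ᵀ * e y₀ else 0)
    (hN' : ∀ z, N' z = Nold z + if z = y₀ then 1 else 0)
    (hpos : ∀ z, 1 ≤ N' z)
    (γ : ℝ) (hγ : 0 < γ)
    -- the weighted loss over the augmented dataset
    (L : Matrix (Fin f) (Fin m) ℝ → ℝ)
    (hL : ∀ W, L W = (∑ z, (1 / (N' z : ℝ)) *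
        ((∑ i, frobSq (x z i * W - e z)) + if z = y₀ then frobSq (x₀ * W - e y₀) else 0))
      + γ * frobSq W)
    -- the updated classifier
    (Wbar : Matrix (Fin f) (Fin m) ℝ)
    (hWbar : Wbar = (∑ z, (1 / (N' z : ℝ)) • A' z + γ • (1 : Matrix (Fin f) (Fin f) ℝ))⁻¹ *
        (∑ z, (1 / (N' z : ℝ)) • C' z)) :
    (∀ W, L Wbar ≤ L W) ∧ (∀ W, L W = L Wbar → W = Wbar) := by
  classical
  set w : Fin m → ℝ := fun z => 1 / (N' z : ℝ) with hw
  have hwnn : ∀ z, 0 ≤ w z := fun z => by positivity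
  set G : Matrix (Fin f) (Fin f) ℝ := ∑ z, w z • A' z + γ • (1 : Matrix (Fin f) (Fin f) ℝ)
    with hGdef
  set Cc : Matrix (Fin f) (Fin m) ℝ := ∑ z, w z • C' z with hCc
  -- each A' z is positive semidefinite
  have hApsd : ∀ z, (A' z).PosSemidef := by
    intro z
    rw [hA' z, hA z]
    apply Matrix.PosSemidef.add
    · have : ∀ i ∈ (Finset.univ : Finset (Fin (Nold z))),
         ((x z i)ᵀ * x z i).PosSemidef := fun i _ => psd_tmul _
      exact Finset.sum_induction _ Matrix.PosSemidef
        (fun a b ha hb => Matrix.PosSemidef.add ha hb) Matrix.PosSemidef.zero this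
    · split_ifs
      · exact psd_tmul _
      · exact Matrix.PosSemidef.zero
  -- G is positive definite
  have hGpd : G.PosDef := by
    rw [hGdef]
    apply Matrix.PosDef.posSemidef_add
    · have : ∀ z ∈ (Finset.univ : Finset (Fin m)), (w z • A' z).PosSemidef :=
        fun z _ => psd_smul (hApsd z) (hwnn z)
      exact Finset.sum_induction _ Matrix.PosSemidef
        (fun a b ha hb => Matrix.PosSemidef.add ha hb) Matrix.PosSemidef.zero this
    · refine ⟨?_, fun v hv => ?_⟩
      · unfold Matrix.IsHermitian
        rw [Matrix.conjTranspose_smul, Matrix.conjTranspose_one, star_trivial]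
      · exact (Matrix.PosDef.one.smul hγ).2 hv
  have hGsymm : Gᵀ = G := by
    have := hGpd.isHermitian
    rwa [Matrix.IsHermitian, Matrix.conjTranspose_eq_transpose_of_trivial] at this
  have hGunit : IsUnit G.det := hGpd.det_pos.ne'.isUnit
  have hGWbar : G * Wbar = Cc := by
    rw [hWbar, ← Matrix.mul_assoc, Matrix.mul_nonsing_inv _ hGunit, Matrix.one_mul]
  -- quadratic expansion of the loss
  have hquad : ∀ W : Matrix (Fin f) (Fin m) ℝ, mdot W (G * W) =
      (∑ z, w z * ((∑ i, mdot W (((x z i)ᵀ * x z i) * W)) +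
        if z = y₀ then mdot W ((x₀ᵀ * x₀) * W) else 0)) + γ * mdot W W := by
    intro W
    have hGW : G * W = (∑ z, w z • (A' z * W)) + γ • W := by
      rw [hGdef, Matrix.add_mul, Matrix.sum_mul, Matrix.smul_mul, Matrix.one_mul]
      congr 1
      exact Finset.sum_congr rfl fun z _ => Matrix.smul_mul _ _ _
    rw [hGW, mdot_add_right, mdot_sum_right, mdot_smul_right]
    congr 1
    refine Finset.sum_congr rfl fun z _ => ?_
    rw [mdot_smul_right]
    congr 1
    rw [hA' z, hA z, Matrix.add_mul, Matrix.sum_mul, mdot_add_right, mdot_sum_right]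
    congr 1
    split_ifs with h
    · rfl
    · simp [mdot]
  have hlin : ∀ W : Matrix (Fin f) (Fin m) ℝ, mdot W Cc =
      ∑ z, w z * ((∑ i, mdot W ((x z i)ᵀ * e z)) +
        if z = y₀ then mdot W (x₀ᵀ * e y₀) else 0) := by
    intro W
    rw [hCc, mdot_sum_right]
    refine Finset.sum_congr rfl fun z _ => ?_
    rw [mdot_smul_right]
    congr 1
    rw [hC' z, hC z, mdot_add_right, mdot_sum_right]
    congr 1
    split_ifs with h
    · rfl
    · simp [mdot]
  -- the loss in quadratic form
  set K : ℝ := ∑ z, w z * ((Nold z : ℝ) * frobSq (e z) +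
      if z = y₀ then frobSq (e y₀) else 0) with hK
  have hLq : ∀ W, L W = mdot W (G * W) - 2 * mdot W Cc + K := by
    intro W
    have hw' : ∀ z : Fin m, (1 : ℝ) / (N' z : ℝ) = w z := fun z => rfl
    rw [hL W, hquad W, hlin W, hK, mdot_self W]
    simp only [hw']
    have hz : ∀ z : Fin m, w z * ((∑ i, frobSq (x z i * W - e z)) +
          if z = y₀ then frobSq (x₀ * W - e y₀) else 0)
        = (w z * ((∑ i, mdot W (((x z i)ᵀ * x z i) * W)) +
            if z = y₀ then mdot W ((x₀ᵀ * x₀) * W) else 0))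
          - 2 * (w z * ((∑ i, mdot W ((x z i)ᵀ * e z)) +
            if z = y₀ then mdot W (x₀ᵀ * e y₀) else 0))
          + (w z * ((Nold z : ℝ) * frobSq (e z) +
            if z = y₀ then frobSq (e y₀) else 0)) := by
      intro z
      have hsum : (∑ i, frobSq (x z i * W - e z)) =
          (∑ i, mdot W (((x z i)ᵀ * x z i) * W))
          - 2 * (∑ i, mdot W ((x z i)ᵀ * e z)) + (Nold z : ℝ) * frobSq (e z) := by
        rw [Finset.mul_sum, ← Finset.sum_sub_distrib]
        have : (Nold z : ℝ) * frobSq (e z) = ∑ _i : Fin (Nold z), frobSq (e z) := by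
          simp [Finset.sum_const, mul_comm]
        rw [this, ← Finset.sum_add_distrib]
        exact Finset.sum_congr rfl fun i _ => frobSq_residual _ _ _
      rw [hsum]
      split_ifs with h
      · rw [frobSq_residual]; ring
      · ring
    have hsplit : (∑ z, ((w z * ((∑ i, mdot W (((x z i)ᵀ * x z i) * W)) +
            if z = y₀ then mdot W ((x₀ᵀ * x₀) * W) else 0))
          - 2 * (w z * ((∑ i, mdot W ((x z i)ᵀ * e z)) +
            if z = y₀ then mdot W (x₀ᵀ * e y₀) else 0))
          + (w z * ((Nold z : ℝ) * frobSq (e z) +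
            if z = y₀ then frobSq (e y₀) else 0))))
        = (∑ z, (w z * ((∑ i, mdot W (((x z i)ᵀ * x z i) * W)) +
            if z = y₀ then mdot W ((x₀ᵀ * x₀) * W) else 0)))
          - 2 * (∑ z, (w z * ((∑ i, mdot W ((x z i)ᵀ * e z)) +
            if z = y₀ then mdot W (x₀ᵀ * e y₀) else 0)))
          + (∑ z, (w z * ((Nold z : ℝ) * frobSq (e z) +
            if z = y₀ then frobSq (e y₀) else 0))) := by
      simp only [Finset.sum_add_distrib, Finset.sum_sub_distrib, ← Finset.mul_sum]
    rw [Finset.sum_congr rfl fun z _ => hz z, hsplit]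
    ring
  -- the key difference identity
  have hswap : ∀ W : Matrix (Fin f) (Fin m) ℝ, mdot Wbar (G * W) = mdot W (G * Wbar) := by
    intro W
    rw [mdot_comm Wbar (G * W), mdot_mul_left G W Wbar, hGsymm]
  have hdiff : ∀ W, L W = L Wbar + mdot (W - Wbar) (G * (W - Wbar)) := by
    intro W
    have hexp : mdot (W - Wbar) (G * (W - Wbar)) =
        mdot W (G * W) - 2 * mdot W Cc + mdot Wbar Cc := by
      rw [Matrix.mul_sub, mdot_sub_right, mdot_comm (W - Wbar) (G * W),
        mdot_comm (W - Wbar) (G * Wbar), mdot_sub_right, mdot_sub_right,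
        mdot_comm (G * W) W, mdot_comm (G * W) Wbar, mdot_comm (G * Wbar) W,
        mdot_comm (G * Wbar) Wbar, hswap W, hGWbar]
      ring
    rw [hLq W, hLq Wbar, hGWbar, hexp]
    ring
  -- positivity of the quadratic form
  have hqpos : ∀ D : Matrix (Fin f) (Fin m) ℝ, γ * mdot D D ≤ mdot D (G * D) := by
    intro D
    rw [hquad D]
    have h0 : (0:ℝ) ≤ ∑ z, w z * ((∑ i, mdot D (((x z i)ᵀ * x z i) * D)) +
        if z = y₀ then mdot D ((x₀ᵀ * x₀) * D) else 0) := by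
      apply Finset.sum_nonneg
      intro z _
      apply mul_nonneg (hwnn z)
      apply add_nonneg
      · apply Finset.sum_nonneg
        intro i _
        rw [Matrix.mul_assoc, ← mdot_mul_left]
        exact mdot_self_nonneg _
      · split_ifs
        · rw [Matrix.mul_assoc, ← mdot_mul_left]
          exact mdot_self_nonneg _
        · exact le_refl _
    linarith
  constructor
  · intro W
    rw [hdiff W]
    have h1 := hqpos (W - Wbar)
    have h2 := mdot_self_nonneg (W - Wbar)
    nlinarith
  · intro W hWeq
    have h0 : mdot (W - Wbar) (G * (W - Wbar)) = 0 := by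
      have := hdiff W
      rw [hWeq] at this
      linarith
    have h1 := hqpos (W - Wbar)
    have h2 := mdot_self_nonneg (W - Wbar)
    have h3 : mdot (W - Wbar) (W - Wbar) = 0 := by nlinarith
    have := mdot_self_eq_zero h3
    exact sub_eq_zero.mp this
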